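/- In D(A^op), the object B̲_B ⊗^L_B ᵦT_A is quasi-isomorphic to the complex 0 → E(l, m⊕p₃) →g'∗→ E(l, p₂) →(gf')∗→ E(l, p₁) →f∗→ E(l, m) (in homological degrees 3, 2, 1, 0), and its homology is H₀ ≅ C(l,m), H₁ ≅ C(l, Ωm), and Hᵢ = 0 for i ≠ 0, 1. -/

import Mathlib

/-!
Shared framework: a `k`-linear Frobenius category `E` with projective objects `add r`,
its stable category `C = E̲` (realized as the category `SC` below), triangulated-structure
data on `C` (`TriData`), 2-Calabi–Yau via a Serre-duality pairing, rigid/maximal rigid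
objects, and module structures over (stable) endomorphism rings.
-/

namespace Paper

open CategoryTheory Limits

universe v u

variable (E : Type u) [Category.{v} E] [Preadditive E] [HasFiniteBiproducts E] [HasBinaryBiproducts E]

/-- An exact structure (in the sense of Quillen) on an additive category:
a distinguished class of kernel–cokernel pairs (`conflations`) satisfying the usual axioms. -/
structure ExactStr where
  /-- `conf i p` says that `x ⟶ᵢ y ⟶ₚ z` is a conflation. -/
  conf : ∀ ⦃x y z : E⦄, (x ⟶ y) → (y ⟶ z) → Prop
  conf_comp : ∀ ⦃x y z : E⦄ {i : x ⟶ y} {p : y ⟶ z}, conf i p → i ≫ p = 0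
  conf_isKernel : ∀ ⦃x y z : E⦄ {i : x ⟶ y} {p : y ⟶ z} (h : conf i p),
    Nonempty (IsLimit (KernelFork.ofι i (conf_comp h)))
  conf_isCokernel : ∀ ⦃x y z : E⦄ {i : x ⟶ y} {p : y ⟶ z} (h : conf i p),
    Nonempty (IsColimit (CokernelCofork.ofπ p (conf_comp h)))
  conf_split : ∀ x y : E, conf (biprod.inl : x ⟶ x ⊞ y) (biprod.snd : x ⊞ y ⟶ y)
  conf_iso : ∀ ⦃x y z x' y' z' : E⦄ {i : x ⟶ y} {p : y ⟶ z}
    (e₁ : x ≅ x') (e₂ : y ≅ y') (e₃ : z ≅ z'), conf i p →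
    conf (e₁.inv ≫ i ≫ e₂.hom) (e₂.inv ≫ p ≫ e₃.hom)
  defl_comp : ∀ ⦃x y z w v : E⦄ {i : x ⟶ y} {p : y ⟶ z} {j : v ⟶ z} {p' : z ⟶ w},
    conf i p → conf j p' → ∃ (u : E) (i'' : u ⟶ y), conf i'' (p ≫ p')
  infl_comp : ∀ ⦃x y z w v : E⦄ {i : x ⟶ y} {p : y ⟶ v} {i' : y ⟶ z} {p' : z ⟶ w},
    conf i p → conf i' p' → ∃ (u : E) (q : z ⟶ u), conf (i ≫ i') q
  conf_pullback : ∀ ⦃x y z : E⦄ {i : x ⟶ y} {p : y ⟶ z}, conf i p →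
    ∀ ⦃z' : E⦄ (f : z' ⟶ z), ∃ (y' : E) (f' : y' ⟶ y) (p' : y' ⟶ z') (i' : x ⟶ y'),
      conf i' p' ∧ IsPullback f' p' p f
  conf_pushout : ∀ ⦃x y z : E⦄ {i : x ⟶ y} {p : y ⟶ z}, conf i p →
    ∀ ⦃x' : E⦄ (f : x ⟶ x'), ∃ (y' : E) (f' : y ⟶ y') (i' : x' ⟶ y') (p' : y' ⟶ z),
      conf i' p' ∧ IsPushout f i i' f'

variable {E}

namespace ExactStr

variable (S : ExactStr E)

/-- `p` is a deflation (admissible epimorphism). -/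
def IsDeflation {y z : E} (p : y ⟶ z) : Prop := ∃ (x : E) (i : x ⟶ y), S.conf i p

/-- `i` is an inflation (admissible monomorphism). -/
def IsInflation {x y : E} (i : x ⟶ y) : Prop := ∃ (z : E) (p : y ⟶ z), S.conf i p

/-- Projective object relative to the exact structure. -/
def IsProj (P : E) : Prop :=
  ∀ ⦃y z : E⦄ (p : y ⟶ z), S.IsDeflation p → ∀ f : P ⟶ z, ∃ g : P ⟶ y, g ≫ p = f

/-- Injective object relative to the exact structure. -/
def IsInj (I : E) : Prop :=
  ∀ ⦃x y : E⦄ (i : x ⟶ y), S.IsInflation i → ∀ f : x ⟶ I, ∃ g : y ⟶ I, i ≫ g = f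

end ExactStr

/-- `y ∈ add x`: `y` is a direct summand of a finite direct sum of copies of `x`. -/
def InAdd (x y : E) : Prop :=
  ∃ (n : ℕ) (s : y ⟶ ⨁ (fun _ : Fin n => x)) (t : (⨁ fun _ : Fin n => x) ⟶ y), s ≫ t = 𝟙 y

variable (E) in
/-- A Frobenius exact category with projectives `= add r`:
enough projectives and injectives, projectives and injectives coincide,
and the projective objects are exactly the objects of `add r`. -/
structure Frobenius extends ExactStr E where
  enough_proj : ∀ x : E, ∃ (P : E) (p : P ⟶ x), toExactStr.IsProj P ∧ toExactStr.IsDeflation p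
  enough_inj : ∀ x : E, ∃ (I : E) (i : x ⟶ I), toExactStr.IsInj I ∧ toExactStr.IsInflation i
  proj_iff_inj : ∀ P : E, toExactStr.IsProj P ↔ toExactStr.IsInj P
  /-- the projective generator -/
  r : E
  proj_iff_add : ∀ P : E, toExactStr.IsProj P ↔ InAdd r P

namespace Frobenius

variable (k : Type) [Field k] [CategoryTheory.Linear k E]

variable (S : Frobenius E)

/-- An object of `E` is *good* if it is isomorphic in `E` to `x' ⊕ r` for some `x'`. -/
def Good (x : E) : Prop := ∃ x' : E, Nonempty (x ≅ x' ⊞ S.r)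

/-- The `k`-submodule of `x ⟶ y` of morphisms factoring through a projective object. -/
def projIdeal (x y : E) : Submodule k (x ⟶ y) :=
  Submodule.span k {f | ∃ (P : E) (g : x ⟶ P) (h : P ⟶ y), S.IsProj P ∧ f = g ≫ h}

lemma leftComp_projIdeal {x y z : E} (f : x ⟶ y) {g : y ⟶ z}
    (hg : g ∈ S.projIdeal k y z) : f ≫ g ∈ S.projIdeal k x z := by
  have : S.projIdeal k y z ≤ (S.projIdeal k x z).comap (Linear.leftComp k z f) := by
    rw [projIdeal, Submodule.span_le]
    rintro u ⟨P, a, b, hP, rfl⟩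
    exact Submodule.subset_span ⟨P, f ≫ a, b, hP, by simp [Linear.leftComp]⟩
  exact this hg

lemma rightComp_projIdeal {x y z : E} {f : x ⟶ y} (hf : f ∈ S.projIdeal k x y)
    (g : y ⟶ z) : f ≫ g ∈ S.projIdeal k x z := by
  have : S.projIdeal k x y ≤ (S.projIdeal k x z).comap (Linear.rightComp k x g) := by
    rw [projIdeal, Submodule.span_le]
    rintro u ⟨P, a, b, hP, rfl⟩
    exact Submodule.subset_span ⟨P, a, b ≫ g, hP, by simp [Linear.rightComp]⟩
  exact this hf

/-- Hom-spaces of the stable category `C = E̲`. -/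
def SHom (x y : E) : Type _ := (x ⟶ y) ⧸ S.projIdeal k x y

instance (x y : E) : AddCommGroup (S.SHom k x y) :=
  inferInstanceAs (AddCommGroup ((x ⟶ y) ⧸ S.projIdeal k x y))

instance (x y : E) : Module k (S.SHom k x y) :=
  inferInstanceAs (Module k ((x ⟶ y) ⧸ S.projIdeal k x y))

/-- Class of a morphism of `E` in the stable category. -/
def toS {x y : E} (f : x ⟶ y) : S.SHom k x y := Submodule.Quotient.mk f

lemma toS_surjective (x y : E) : Function.Surjective (S.toS k (x := x) (y := y)) :=
  Submodule.Quotient.mk_surjective _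

end Frobenius

/-- The stable category `C = E̲` of the Frobenius category `E`:
same objects, morphisms modulo those factoring through a projective object. -/
def SC (_S : Frobenius E) (k : Type) [Field k] [CategoryTheory.Linear k E] : Type u := E

namespace SC

variable {S : Frobenius E} {k : Type} [Field k] [CategoryTheory.Linear k E]

/-- The canonical identification of objects of `E` with objects of the stable category. -/
abbrev of (S : Frobenius E) (k : Type) [Field k] [CategoryTheory.Linear k E] (x : E) :
    SC S k := x

/-- The object of `E` underlying an object of the stable category. -/
abbrev un (x : SC S k) : E := x

instance : Category (SC S k) where
  Hom x y := S.SHom k x.un y.un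
  id x := S.toS k (𝟙 x.un)
  comp {x y z} f g := by
    refine Quotient.liftOn₂ f g (fun f g => S.toS k (f ≫ g)) ?_
    intro a₁ b₁ a₂ b₂ h₁ h₂
    have h₁' : a₁ - a₂ ∈ S.projIdeal k x.un y.un :=
      (Submodule.Quotient.eq _).mp (Quotient.sound h₁)
    have h₂' : b₁ - b₂ ∈ S.projIdeal k y.un z.un :=
      (Submodule.Quotient.eq _).mp (Quotient.sound h₂)
    show S.toS k (a₁ ≫ b₁) = S.toS k (a₂ ≫ b₂)
    unfold Frobenius.toS
    refine (Submodule.Quotient.eq (S.projIdeal k x.un z.un)).mpr ?_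
    have h : a₁ ≫ b₁ - a₂ ≫ b₂ = a₁ ≫ (b₁ - b₂) + (a₁ - a₂) ≫ b₂ := by
      simp only [Preadditive.comp_sub, Preadditive.sub_comp]; abel
    rw [h]
    exact add_mem (S.leftComp_projIdeal k _ h₂') (S.rightComp_projIdeal k h₁' _)
  id_comp {x y} f := by
    obtain ⟨f, rfl⟩ := S.toS_surjective k _ _ f
    show S.toS k (𝟙 _ ≫ f) = S.toS k f
    rw [Category.id_comp]
  comp_id {x y} f := by
    obtain ⟨f, rfl⟩ := S.toS_surjective k _ _ f
    show S.toS k (f ≫ 𝟙 _) = S.toS k f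
    rw [Category.comp_id]
  assoc {w x y z} f g h := by
    obtain ⟨f, rfl⟩ := S.toS_surjective k _ _ f
    obtain ⟨g, rfl⟩ := S.toS_surjective k _ _ g
    obtain ⟨h, rfl⟩ := S.toS_surjective k _ _ h
    show S.toS k ((f ≫ g) ≫ h) = S.toS k (f ≫ (g ≫ h))
    rw [Category.assoc]

/-- The canonical functor map on morphisms: the class in the stable category of a
morphism of `E`, seen as a morphism of `SC S k`. -/
def toSC (S : Frobenius E) (k : Type) [Field k] [CategoryTheory.Linear k E]
    {x y : E} (f : x ⟶ y) : SC.of S k x ⟶ SC.of S k y := S.toS k f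

lemma toSC_comp {x y z : E} (f : x ⟶ y) (g : y ⟶ z) :
    toSC S k f ≫ toSC S k g = toSC S k (f ≫ g) := rfl

lemma toSC_surjective (x y : E) :
    Function.Surjective (toSC S k (x := x) (y := y)) :=
  Submodule.Quotient.mk_surjective _

instance : Preadditive (SC S k) where
  homGroup x y := inferInstanceAs (AddCommGroup (S.SHom k x.un y.un))
  add_comp x y z f f' g := by
    obtain ⟨f, rfl⟩ := S.toS_surjective k _ _ f
    obtain ⟨f', rfl⟩ := S.toS_surjective k _ _ f'
    obtain ⟨g, rfl⟩ := S.toS_surjective k _ _ g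
    show S.toS k ((f + f') ≫ g) = S.toS k (f ≫ g) + S.toS k (f' ≫ g)
    rw [Preadditive.add_comp]; rfl
  comp_add x y z f g g' := by
    obtain ⟨f, rfl⟩ := S.toS_surjective k _ _ f
    obtain ⟨g, rfl⟩ := S.toS_surjective k _ _ g
    obtain ⟨g', rfl⟩ := S.toS_surjective k _ _ g'
    show S.toS k (f ≫ (g + g')) = S.toS k (f ≫ g) + S.toS k (f ≫ g')
    rw [Preadditive.comp_add]; rfl

instance : CategoryTheory.Linear k (SC S k) where
  homModule x y := inferInstanceAs (Module k (S.SHom k x.un y.un))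
  smul_comp x y z r f g := by
    obtain ⟨f, rfl⟩ := S.toS_surjective k _ _ f
    obtain ⟨g, rfl⟩ := S.toS_surjective k _ _ g
    show S.toS k ((r • f) ≫ g) = r • S.toS k (f ≫ g)
    rw [Linear.smul_comp]; rfl
  comp_smul x y z f r g := by
    obtain ⟨f, rfl⟩ := S.toS_surjective k _ _ f
    obtain ⟨g, rfl⟩ := S.toS_surjective k _ _ g
    show S.toS k (f ≫ (r • g)) = r • S.toS k (f ≫ g)
    rw [Linear.comp_smul]; rfl

end SC

end Paper

section EndModules

namespace Paper

open CategoryTheory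

/-- In any preadditive category, `x ⟶ y` is a right module over `End x`
(i.e. a left module over `(End x)ᵐᵒᵖ`), acting by precomposition. -/
instance moduleEndLeftOp {C : Type*} [Category C] [Preadditive C] {x y : C} :
    Module (End x)ᵐᵒᵖ (x ⟶ y) where
  smul a f := a.unop ≫ f
  one_smul f := Category.id_comp f
  mul_smul a b f := by
    show (MulOpposite.unop a ≫ MulOpposite.unop b) ≫ f =
      MulOpposite.unop a ≫ MulOpposite.unop b ≫ f
    rw [Category.assoc]
  smul_zero a := Limits.comp_zero
  smul_add a f g := Preadditive.comp_add _ _ _ _ _ _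
  add_smul a b f := Preadditive.add_comp _ _ _ _ _ _
  zero_smul f := Limits.zero_comp

lemma op_smul_def {C : Type*} [Category C] [Preadditive C] {x y : C}
    (a : (End x)ᵐᵒᵖ) (f : x ⟶ y) : a • f = a.unop ≫ f := rfl

lemma end_smul_def {C : Type*} [Category C] [Preadditive C] {x y : C}
    (a : End y) (f : x ⟶ y) : a • f = f ≫ a := rfl

/-- Postcomposition as a map of right `End x`-modules. -/
def postcompL {C : Type*} [Category C] [Preadditive C] {x y z : C} (f : y ⟶ z) :
    (x ⟶ y) →ₗ[(End x)ᵐᵒᵖ] (x ⟶ z) where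
  toFun g := g ≫ f
  map_add' g g' := Preadditive.add_comp _ _ _ _ _ _
  map_smul' a g := by
    show (a.unop ≫ g) ≫ f = a.unop ≫ g ≫ f
    rw [Category.assoc]

/-- Precomposition as a map of left `End z`-modules. -/
def precompL {C : Type*} [Category C] [Preadditive C] {x y z : C} (f : x ⟶ y) :
    (y ⟶ z) →ₗ[End z] (x ⟶ z) where
  toFun g := f ≫ g
  map_add' g g' := Preadditive.comp_add _ _ _ _ _ _
  map_smul' a g := by
    show f ≫ g ≫ a = (f ≫ g) ≫ a
    rw [Category.assoc]

end Paper

end EndModules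

namespace Paper

open CategoryTheory Limits

section Tri

variable {E : Type u} [Category.{v} E] [Preadditive E] [HasFiniteBiproducts E]
  [HasBinaryBiproducts E]

/-- The data and axioms of the triangulated structure on the stable category `C = SC S k`
of the Frobenius category `E` (suspension `Σ`, distinguished triangles), together with the
assumptions that `C` is 2-Calabi–Yau (formulated via a nondegenerate associative Serre
pairing `C(x,y) × C(y,Σ²x) → k`, functorial in both variables), Hom-finite over `k`, and
has split idempotents. -/
structure TriData (S : Frobenius E) (k : Type) [Field k] [CategoryTheory.Linear k E] where
  /-- the suspension functor -/
  susp : SC S k ⥤ SC S k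
  equiv : susp.IsEquivalence
  additive : susp.Additive
  linear : Functor.Linear k susp
  /-- distinguished triangles `x ⟶ y ⟶ z ⟶ Σ x` -/
  dtri : ∀ ⦃x y z : SC S k⦄, (x ⟶ y) → (y ⟶ z) → (z ⟶ susp.obj x) → Prop
  dtri_comp_zero : ∀ ⦃x y z : SC S k⦄ {f : x ⟶ y} {g : y ⟶ z} {h : z ⟶ susp.obj x},
    dtri f g h → f ≫ g = 0
  dtri_rot : ∀ ⦃x y z : SC S k⦄ {f : x ⟶ y} {g : y ⟶ z} {h : z ⟶ susp.obj x},
    dtri f g h → dtri g h (-(susp.map f))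
  dtri_complete : ∀ ⦃x y : SC S k⦄ (f : x ⟶ y),
    ∃ (z : SC S k) (g : y ⟶ z) (h : z ⟶ susp.obj x), dtri f g h
  dtri_ext : ∀ ⦃x y z x' y' z' : SC S k⦄
    {f : x ⟶ y} {g : y ⟶ z} {h : z ⟶ susp.obj x}
    {f' : x' ⟶ y'} {g' : y' ⟶ z'} {h' : z' ⟶ susp.obj x'},
    dtri f g h → dtri f' g' h' → ∀ (a : x ⟶ x') (b : y ⟶ y'), f ≫ b = a ≫ f' →
      ∃ c : z ⟶ z', g ≫ c = b ≫ g' ∧ h ≫ susp.map a = c ≫ h'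
  /-- conflations of `E` induce distinguished triangles in the stable category -/
  conf_dtri : ∀ ⦃x y z : E⦄ {i : x ⟶ y} {p : y ⟶ z}, S.conf i p →
    ∃ h : SC.of S k z ⟶ susp.obj (SC.of S k x), dtri (SC.toSC S k i) (SC.toSC S k p) h
  /-- the 2-Calabi–Yau (Serre duality) pairing `C(x,y) ⊗ C(y,Σ²x) → k` -/
  pair : ∀ (x y : SC S k), (x ⟶ y) →ₗ[k] (y ⟶ susp.obj (susp.obj x)) →ₗ[k] k
  pair_assoc : ∀ ⦃x y z : SC S k⦄ (f : x ⟶ y) (g : y ⟶ z)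
    (h : z ⟶ susp.obj (susp.obj x)), pair x z (f ≫ g) h = pair x y f (g ≫ h)
  pair_nondeg_left : ∀ ⦃x y : SC S k⦄ (f : x ⟶ y), (∀ g, pair x y f g = 0) → f = 0
  pair_nondeg_right : ∀ ⦃x y : SC S k⦄ (g : y ⟶ susp.obj (susp.obj x)),
    (∀ f, pair x y f g = 0) → g = 0
  /-- `C` is Hom-finite -/
  homFinite : ∀ x y : SC S k, FiniteDimensional k (x ⟶ y)
  /-- `C` has split idempotents -/
  idem : IsIdempotentComplete (SC S k)

namespace TriData

variable {k : Type} [Field k] [CategoryTheory.Linear k E] {S : Frobenius E}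
variable (T : TriData S k)

/-- `x` is rigid: `C(x, Σx) = 0`. -/
def Rigid (x : SC S k) : Prop := ∀ f : x ⟶ T.susp.obj x, f = 0

/-- `y ∈ add x` in the stable category. -/
def AddSummand (_T : TriData S k) (x y : SC S k) : Prop :=
  ∃ (n : ℕ) (s : y ⟶ SC.of S k (⨁ fun _ : Fin n => x.un))
    (t : SC.of S k (⨁ fun _ : Fin n => x.un) ⟶ y), s ≫ t = 𝟙 y

/-- `x` is maximal rigid: it is rigid and `C(x ⊕ y, Σ(x ⊕ y)) = 0` implies `y ∈ add x`
(formulated componentwise). -/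
def MaxRigid (x : SC S k) : Prop :=
  T.Rigid x ∧ ∀ y : SC S k, T.Rigid y → (∀ f : x ⟶ T.susp.obj y, f = 0) →
    (∀ f : y ⟶ T.susp.obj x, f = 0) → T.AddSummand x y

/-- `Σ² x ≅ x` in the stable category. -/
def SuspSqFix (x : SC S k) : Prop := Nonempty (T.susp.obj (T.susp.obj x) ≅ x)

end TriData

end Tri

/-- A ring is self-injective if it is injective as a (left) module over itself. -/
def IsSelfInjectiveRing (A : Type*) [Ring A] : Prop := Module.Injective A A

end Paper

namespace Paper

open CategoryTheory Limits

noncomputable section ATensor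

set_option linter.unusedSectionVars false

variable (k : Type*) [CommRing k]
variable (A : Type*) [Ring A] [Algebra k A]
variable (M : Type*) [AddCommGroup M] [Module k M] [Module Aᵐᵒᵖ M]
variable (N : Type*) [AddCommGroup N] [Module k N] [Module A N]

/-- The relations defining the tensor product `M ⊗_A N` of a right `A`-module and a
left `A`-module over the (possibly noncommutative) `k`-algebra `A`, as a quotient of
`M ⊗_k N`. -/
def atensorRel : Submodule k (TensorProduct k M N) :=
  Submodule.span k {t | ∃ (m : M) (a : A) (n : N),
    t = (MulOpposite.op a • m) ⊗ₜ[k] n - m ⊗ₜ[k] (a • n)}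

/-- The tensor product `M ⊗_A N` of a right `A`-module and a left `A`-module over the
(possibly noncommutative) `k`-algebra `A`. -/
def ATensor : Type _ := TensorProduct k M N ⧸ atensorRel k A M N

instance : AddCommGroup (ATensor k A M N) :=
  inferInstanceAs (AddCommGroup (TensorProduct k M N ⧸ atensorRel k A M N))

instance : Module k (ATensor k A M N) :=
  inferInstanceAs (Module k (TensorProduct k M N ⧸ atensorRel k A M N))

namespace ATensor

/-- The canonical balanced bilinear map `M × N → M ⊗_A N`. -/
def mkBilin : M →ₗ[k] N →ₗ[k] ATensor k A M N :=
  (TensorProduct.mk k M N).compr₂ (atensorRel k A M N).mkQ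

/-- `m ⊗ n` in `M ⊗_A N`. -/
def mk (m : M) (n : N) : ATensor k A M N := mkBilin k A M N m n

variable {k A M N}

lemma mk_smul (m : M) (a : A) (n : N) :
    mk k A M N (MulOpposite.op a • m) n = mk k A M N m (a • n) := by
  unfold mk mkBilin
  show Submodule.Quotient.mk _ = Submodule.Quotient.mk _
  rw [Submodule.Quotient.eq]
  exact Submodule.subset_span ⟨m, a, n, rfl⟩

lemma mk_surjective_span (t : ATensor k A M N) :
    ∃ s : TensorProduct k M N, Submodule.Quotient.mk s = t :=
  Submodule.Quotient.mk_surjective _ t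

variable {P : Type*} [AddCommGroup P] [Module k P]

/-- Lift a balanced `k`-bilinear map to the tensor product `M ⊗_A N`. -/
def lift (φ : M →ₗ[k] N →ₗ[k] P)
    (bal : ∀ (m : M) (a : A) (n : N), φ (MulOpposite.op a • m) n = φ m (a • n)) :
    ATensor k A M N →ₗ[k] P := by
  refine Submodule.liftQ _ (TensorProduct.lift φ) ?_
  rw [atensorRel, Submodule.span_le]
  rintro t ⟨m, a, n, rfl⟩
  simp only [SetLike.mem_coe, LinearMap.mem_ker, map_sub, TensorProduct.lift.tmul]
  rw [bal m a n, sub_self]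

@[simp] lemma lift_mk (φ : M →ₗ[k] N →ₗ[k] P) (bal) (m : M) (n : N) :
    lift φ bal (mk k A M N m n) = φ m n := rfl

lemma hom_ext {f g : ATensor k A M N →ₗ[k] P}
    (h : ∀ m n, f (mk k A M N m n) = g (mk k A M N m n)) : f = g := by
  apply Submodule.linearMap_qext
  apply TensorProduct.ext'
  intro m n
  exact h m n

variable {M' : Type*} [AddCommGroup M'] [Module k M'] [Module Aᵐᵒᵖ M']
variable {N' : Type*} [AddCommGroup N'] [Module k N'] [Module A N']

/-- Functoriality of `M ⊗_A N` in the right `A`-module variable. -/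
def mapLeft (f : M →ₗ[k] M') (hf : ∀ (a : A) (m : M),
    f (MulOpposite.op a • m) = MulOpposite.op a • f m) :
    ATensor k A M N →ₗ[k] ATensor k A M' N :=
  lift ((mkBilin k A M' N).comp f) (by
    intro m a n
    simp only [LinearMap.comp_apply, hf]
    exact mk_smul _ _ _)

/-- Functoriality of `M ⊗_A N` in the left `A`-module variable. -/
def mapRight (g : N →ₗ[k] N') (hg : ∀ (a : A) (n : N), g (a • n) = a • g n) :
    ATensor k A M N →ₗ[k] ATensor k A M N' :=
  lift ((mkBilin k A M N').compl₂ g) (by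
    intro m a n
    simp only [LinearMap.compl₂_apply, hg]
    exact mk_smul _ _ _)

@[simp] lemma mapLeft_mk (f : M →ₗ[k] M') (hf) (m : M) (n : N) :
    mapLeft (N := N) f hf (mk k A M N m n) = mk k A M' N (f m) n := rfl

@[simp] lemma mapRight_mk (g : N →ₗ[k] N') (hg) (m : M) (n : N) :
    mapRight (M := M) g hg (mk k A M N m n) = mk k A M N' m (g n) := rfl

end ATensor

end ATensor

end Paper

namespace Paper

open CategoryTheory Limits

section StableModules

variable {E : Type u} [Category.{v} E] [Preadditive E] [HasFiniteBiproducts E]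
  [HasBinaryBiproducts E]
variable (k : Type) [Field k] [CategoryTheory.Linear k E]
variable (S : Frobenius E)

namespace Frobenius

/-- Precomposition on stable Hom spaces. -/
def preS {x' x y : E} (a : x' ⟶ x) : S.SHom k x y →ₗ[k] S.SHom k x' y :=
  Submodule.mapQ _ _ (Linear.leftComp k y a)
    (fun f hf => S.leftComp_projIdeal k a hf)

/-- Postcomposition on stable Hom spaces. -/
def postS {x y y' : E} (b : y ⟶ y') : S.SHom k x y →ₗ[k] S.SHom k x y' :=
  Submodule.mapQ _ _ (Linear.rightComp k x b)
    (fun f hf => S.rightComp_projIdeal k hf b)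

@[simp] lemma preS_toS {x' x y : E} (a : x' ⟶ x) (f : x ⟶ y) :
    S.preS k a (S.toS k f) = S.toS k (a ≫ f) := rfl

@[simp] lemma postS_toS {x y y' : E} (b : y ⟶ y') (f : x ⟶ y) :
    S.postS k b (S.toS k f) = S.toS k (f ≫ b) := rfl

/-- `C(x,y)` is a right `E(x,x)`-module. -/
instance shomModuleOp (x y : E) : Module (End x)ᵐᵒᵖ (S.SHom k x y) where
  smul a u := S.preS k a.unop u
  one_smul u := by
    obtain ⟨f, rfl⟩ := S.toS_surjective k _ _ u
    show S.toS k ((𝟙 x : End x) ≫ f) = S.toS k f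
    rw [Category.id_comp]
  mul_smul a b u := by
    obtain ⟨f, rfl⟩ := S.toS_surjective k _ _ u
    show S.toS k ((MulOpposite.unop a ≫ MulOpposite.unop b) ≫ f)
      = S.toS k (MulOpposite.unop a ≫ MulOpposite.unop b ≫ f)
    rw [Category.assoc]
  smul_zero a := map_zero _
  smul_add a u v := map_add _ _ _
  add_smul a b u := by
    obtain ⟨f, rfl⟩ := S.toS_surjective k _ _ u
    show S.toS k ((MulOpposite.unop a + MulOpposite.unop b) ≫ f)
      = S.toS k (MulOpposite.unop a ≫ f) + S.toS k (MulOpposite.unop b ≫ f)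
    rw [Preadditive.add_comp]
    rfl
  zero_smul u := by
    obtain ⟨f, rfl⟩ := S.toS_surjective k _ _ u
    show S.toS k ((0 : x ⟶ x) ≫ f) = 0
    rw [Limits.zero_comp]
    rfl

lemma shom_op_smul_def {x y : E} (a : (End x)ᵐᵒᵖ) (u : S.SHom k x y) :
    a • u = S.preS k a.unop u := rfl

/-- `C(x,y)` is a left `E(y,y)`-module (with the `End`-multiplication convention
`a * b = b ≫ a`, so the action is by postcomposition). -/
instance shomModuleEnd (x y : E) : Module (End y) (S.SHom k x y) where
  smul b u := S.postS k b u
  one_smul u := by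
    obtain ⟨f, rfl⟩ := S.toS_surjective k _ _ u
    show S.toS k (f ≫ (𝟙 y : End y)) = S.toS k f
    rw [Category.comp_id]
  mul_smul a b u := by
    obtain ⟨f, rfl⟩ := S.toS_surjective k _ _ u
    show S.toS k (f ≫ (b ≫ a)) = S.toS k ((f ≫ b) ≫ a)
    rw [Category.assoc]
  smul_zero a := map_zero _
  smul_add a u v := map_add _ _ _
  add_smul a b u := by
    obtain ⟨f, rfl⟩ := S.toS_surjective k _ _ u
    show S.toS k (f ≫ (a + b)) = S.toS k (f ≫ a) + S.toS k (f ≫ b)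
    rw [Preadditive.comp_add]
    rfl
  zero_smul u := by
    obtain ⟨f, rfl⟩ := S.toS_surjective k _ _ u
    show S.toS k (f ≫ (0 : y ⟶ y)) = 0
    rw [Limits.comp_zero]
    rfl

lemma shom_end_smul_def {x y : E} (b : End y) (u : S.SHom k x y) :
    b • u = S.postS k b u := rfl

end Frobenius

end StableModules

section TensorFunctor

variable (A : Type v) [Ring A]
variable (M : Type v) [AddCommGroup M] [Module Aᵐᵒᵖ M]

/-- The functor `M ⊗_A — : A-Mod ⥤ Ab` (realized with `ℤ`-coefficients),
for a right `A`-module `M`. -/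
noncomputable def atensorFunctor : ModuleCat.{v} A ⥤ ModuleCat.{v} ℤ where
  obj N := ModuleCat.of ℤ (ATensor ℤ A M N)
  map {N N'} g := ModuleCat.ofHom (ATensor.mapRight (M := M) (g.hom.toAddMonoidHom.toIntLinearMap)
    (fun a n => map_smul g.hom a n))
  map_id N := by
    apply ModuleCat.hom_ext
    apply ATensor.hom_ext
    intro m n
    rfl
  map_comp {N N' N''} g h := by
    apply ModuleCat.hom_ext
    apply ATensor.hom_ext
    intro m n
    rfl

noncomputable instance : (atensorFunctor.{v} A M).Additive where
  map_add := by
    intros N N' g h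
    apply ModuleCat.hom_ext
    apply ATensor.hom_ext
    intro m n
    show ATensor.mk ℤ A M _ m ((g.hom + h.hom) n) =
      ATensor.mk ℤ A M _ m (g.hom n) + ATensor.mk ℤ A M _ m (h.hom n)
    rw [LinearMap.add_apply]
    exact map_add (ATensor.mkBilin ℤ A M _ m) _ _

end TensorFunctor

end Paper

namespace Paper

open CategoryTheory Limits

section TwoTerm

universe w

variable {R : Type w} [Ring R]

/-- The `ℕ`-indexed chain complex `⋯ → 0 → M → N` (with `M` in homological degree 1 and
`N` in degree 0) associated to a morphism `f : M ⟶ N` of modules. -/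
noncomputable def twoTermChain {M N : ModuleCat.{w} R} (f : M ⟶ N) :
    ChainComplex (ModuleCat.{w} R) ℕ :=
  ChainComplex.of
    (fun n => match n with
      | 0 => N
      | 1 => M
      | _ + 2 => ModuleCat.of R PUnit)
    (fun n => match n with
      | 0 => f
      | _ + 1 => 0)
    (fun n => Limits.zero_comp)

/-- The two-term complex of a morphism `f : M ⟶ N`, as a `ℤ`-indexed cochain complex
concentrated in cohomological degrees `-1, 0` (i.e. homological degrees `1, 0`). -/
noncomputable def twoTermCochainZ {M N : ModuleCat.{w} R} (f : M ⟶ N) :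
    CochainComplex (ModuleCat.{w} R) ℤ :=
  ((ComplexShape.embeddingUpIntLE (0 : ℤ)).extendFunctor (ModuleCat.{w} R)).obj
    (twoTermChain f)

end TwoTerm

section Thick

variable {K : Type*} [Category K] [Preadditive K] [HasZeroObject K] [HasShift K ℤ]
  [∀ n : ℤ, (CategoryTheory.shiftFunctor K n).Additive] [Pretriangulated K]

/-- `IsThickMember G X`: `X` belongs to the thick closure of `add G`, i.e. to the
smallest triangulated subcategory of `K` containing `G` and closed under direct
summands. -/
inductive IsThickMember (G : K) : K → Prop
  | base : IsThickMember G G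
  | of_iso {X Y : K} : Nonempty (X ≅ Y) → IsThickMember G X → IsThickMember G Y
  | zero {Z : K} : Limits.IsZero Z → IsThickMember G Z
  | shift {X : K} (n : ℤ) : IsThickMember G X → IsThickMember G (X⟦n⟧)
  | cone {T : Pretriangulated.Triangle K} (hT : T ∈ distTriang K) :
      IsThickMember G T.obj₁ → IsThickMember G T.obj₂ → IsThickMember G T.obj₃
  | summand {X Y : K} (s : Y ⟶ X) (r : X ⟶ Y) :
      s ≫ r = 𝟙 Y → IsThickMember G X → IsThickMember G Y

end Thick

end Paper

namespace Paper

open CategoryTheory Limits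

section TensorFunctorL

variable (A : Type v) [Ring A]
variable (N : Type v) [AddCommGroup N] [Module A N]

/-- The functor `— ⊗_A N : Mod-A ⥤ Ab` (realized with `ℤ`-coefficients),
for a left `A`-module `N`. -/
noncomputable def atensorFunctorL : ModuleCat.{v} Aᵐᵒᵖ ⥤ ModuleCat.{v} ℤ where
  obj M := ModuleCat.of ℤ (ATensor ℤ A M N)
  map {M M'} g := ModuleCat.ofHom (ATensor.mapLeft (N := N) (g.hom.toAddMonoidHom.toIntLinearMap)
    (fun a m => map_smul g.hom (MulOpposite.op a) m))
  map_id M := by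
    apply ModuleCat.hom_ext
    apply ATensor.hom_ext
    intro m n
    rfl
  map_comp {M M' M''} g h := by
    apply ModuleCat.hom_ext
    apply ATensor.hom_ext
    intro m n
    rfl

noncomputable instance : (atensorFunctorL.{v} A N).Additive where
  map_add := by
    intros M M' g h
    apply ModuleCat.hom_ext
    apply ATensor.hom_ext
    intro m n
    show ATensor.mk ℤ A _ N ((g.hom + h.hom) m) n =
      ATensor.mk ℤ A _ N (g.hom m) n + ATensor.mk ℤ A _ N (h.hom m) n
    rw [LinearMap.add_apply]
    show ATensor.mkBilin ℤ A M' N (g.hom m + h.hom m) n =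
      ATensor.mkBilin ℤ A M' N (g.hom m) n + ATensor.mkBilin ℤ A M' N (h.hom m) n
    rw [map_add, LinearMap.add_apply]

end TensorFunctorL

end Paper

set_option linter.unusedSectionVars false

namespace Paper

open CategoryTheory Limits

universe v' u'

variable {E : Type u'} [Category.{v'} E] [Preadditive E] [HasFiniteBiproducts E]
  [HasBinaryBiproducts E]

/-- The four-term chain complex `0 → E(w, m⊞p₃) → E(w,p₂) → E(w,p₁) → E(w,m)`
(homological degrees 3, 2, 1, 0) of right `E(w,w)`-modules obtained by applying
`E(w,−)` to the splice of the conflations `0 → Ωm → p₁ → m → 0` and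
`0 → m⊞p₃ → p₂ → Ωm → 0`. -/
noncomputable def fourTermComplex (w : E) {m Ωm p₁ p₂ p₃ : E}
    (g : Ωm ⟶ p₁) (f : p₁ ⟶ m) (g' : m ⊞ p₃ ⟶ p₂) (f' : p₂ ⟶ Ωm)
    (h1 : g ≫ f = 0) (h2 : g' ≫ f' = 0) :
    ChainComplex (ModuleCat.{v'} ((End w)ᵐᵒᵖ)) ℕ :=
  ChainComplex.of
    (fun n => match n with
      | 0 => ModuleCat.of _ (w ⟶ m)
      | 1 => ModuleCat.of _ (w ⟶ p₁)
      | 2 => ModuleCat.of _ (w ⟶ p₂)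
      | 3 => ModuleCat.of _ (w ⟶ m ⊞ p₃)
      | _ + 4 => ModuleCat.of _ PUnit)
    (fun n => match n with
      | 0 => ModuleCat.ofHom (postcompL f)
      | 1 => ModuleCat.ofHom (postcompL (f' ≫ g))
      | 2 => ModuleCat.ofHom (postcompL g')
      | _ + 3 => 0)
    (fun n => match n with
      | 0 => by
          ext u
          show (u ≫ (f' ≫ g)) ≫ f = (0 : _ →ₗ[(End w)ᵐᵒᵖ] _) u
          have e : (u ≫ (f' ≫ g)) ≫ f = u ≫ f' ≫ (g ≫ f) := by
            simp only [Category.assoc]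
          rw [e, h1, Limits.comp_zero, Limits.comp_zero]
          rfl
      | 1 => by
          ext u
          show (u ≫ g') ≫ (f' ≫ g) = (0 : _ →ₗ[(End w)ᵐᵒᵖ] _) u
          have e : (u ≫ g') ≫ (f' ≫ g) = u ≫ (g' ≫ f') ≫ g := by
            simp only [Category.assoc]
          rw [e, h2, Limits.zero_comp, Limits.comp_zero]
          rfl
      | _ + 2 => Limits.zero_comp)

end Paper

/-!
Because `m` is good, `r` is a retract of `m`, so every projective object, and hence every term of
the spliced resolution `m ⊞ p₃ → p₂ → p₁ → m`, lies in `add m`. For `x ∈ add m`, with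
`𝟙 x = ∑ aⱼ ≫ bⱼ` through `m`, composition `E(m,x) ⊗_B E(l,m) → E(l,x)` is bijective with inverse
`h ↦ ∑ bⱼ ⊗ (h ≫ aⱼ)`; being natural in `x`, it identifies `Q_B ⊗_B T` with `E(l,-)` applied to the
splice. The homology of the latter comes from left exactness of `E(l,-)` on conflations: it is
exact in degrees 2 and 3, the image of `f_*` (resp. `f'_*`) consists of the maps factoring through
a projective, so `H₀ = E(l,m)/P(l,m)`, and `g_*` identifies `ker f_* / im (f' ≫ g)_*` with
`E(l,Ωm)/P(l,Ωm)`.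
-/

namespace CategoryTheory.ShortComplex

lemma nonempty_moduleCat_homology_iso {R : Type*} [Ring R]
    (S : ShortComplex (ModuleCat.{v} R)) {P Q : Type v} [AddCommGroup P] [Module R P]
    [AddCommGroup Q] [Module R Q] (ι : P →ₗ[R] S.X₂) (hι : Function.Injective ι)
    (hιg : LinearMap.range ι = LinearMap.ker S.g.hom) (π : P →ₗ[R] Q)
    (hπ : Function.Surjective π) (hπf : ∀ p, π p = 0 ↔ ∃ y, S.f y = ι p) :
    Nonempty (S.homology ≅ ModuleCat.of R Q) := by
  let e : P ≃ₗ[R] LinearMap.ker S.g.hom :=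
    (LinearEquiv.ofInjective ι hι).trans (LinearEquiv.ofEq _ _ hιg)
  let φ := π ∘ₗ e.symm.toLinearMap
  have hφ : Function.Surjective φ := hπ.comp e.symm.surjective
  have hker : LinearMap.range S.moduleCatToCycles = LinearMap.ker φ := by
    ext c
    obtain ⟨p, rfl⟩ := e.surjective c
    simp only [LinearMap.mem_range, LinearMap.mem_ker, φ, LinearMap.comp_apply,
      LinearEquiv.coe_coe, LinearEquiv.symm_apply_apply, hπf, Subtype.ext_iff]
    rfl
  exact ⟨S.moduleCatHomologyIso ≪≫
    ((Submodule.quotEquivOfEq _ _ hker).trans (φ.quotKerEquivOfSurjective hφ)).toModuleIso⟩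

end CategoryTheory.ShortComplex

namespace Paper

open CategoryTheory Limits

section AddClosure

variable {E : Type*} [Category E] [Preadditive E] [HasFiniteBiproducts E]

lemma inAdd_iff_exists_sum {x y : E} :
    InAdd x y ↔ ∃ (n : ℕ) (a : Fin n → (y ⟶ x)) (b : Fin n → (x ⟶ y)), ∑ j, a j ≫ b j = 𝟙 y := by
  constructor
  · rintro ⟨n, s, t, hst⟩
    refine ⟨n, fun j => s ≫ biproduct.π _ j, fun j => biproduct.ι (fun _ : Fin n => x) j ≫ t, ?_⟩
    calc _ = s ≫ (∑ j, biproduct.π _ j ≫ biproduct.ι (fun _ : Fin n => x) j) ≫ t := by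
          simp only [Preadditive.comp_sum, Preadditive.sum_comp, Category.assoc]
      _ = 𝟙 y := by rw [biproduct.total, Category.id_comp, hst]
  · rintro ⟨n, a, b, hab⟩
    exact ⟨n, biproduct.lift a, biproduct.desc b, by rw [biproduct.lift_desc, hab]⟩

lemma InAdd.refl (x : E) : InAdd x x :=
  inAdd_iff_exists_sum.mpr ⟨1, fun _ => 𝟙 x, fun _ => 𝟙 x, by simp⟩

lemma InAdd.of_retract {x x' y : E} (i : x ⟶ x') (q : x' ⟶ x) (hiq : i ≫ q = 𝟙 x)
    (h : InAdd x y) : InAdd x' y := by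
  obtain ⟨n, a, b, hab⟩ := inAdd_iff_exists_sum.mp h
  refine inAdd_iff_exists_sum.mpr ⟨n, fun j => a j ≫ i, fun j => q ≫ b j, ?_⟩
  simpa only [Category.assoc, reassoc_of% hiq] using hab

lemma InAdd.biprod [HasBinaryBiproducts E] {x y z : E} (hy : InAdd x y) (hz : InAdd x z) :
    InAdd x (y ⊞ z) := by
  obtain ⟨n₁, a₁, b₁, h₁⟩ := inAdd_iff_exists_sum.mp hy
  obtain ⟨n₂, a₂, b₂, h₂⟩ := inAdd_iff_exists_sum.mp hz
  refine inAdd_iff_exists_sum.mpr ⟨n₁ + n₂,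
    Fin.addCases (fun j => biprod.fst ≫ a₁ j) (fun j => biprod.snd ≫ a₂ j),
    Fin.addCases (fun j => b₁ j ≫ biprod.inl) (fun j => b₂ j ≫ biprod.inr), ?_⟩
  calc _ = biprod.fst ≫ (∑ j, a₁ j ≫ b₁ j) ≫ biprod.inl
        + biprod.snd ≫ (∑ j, a₂ j ≫ b₂ j) ≫ biprod.inr := by
        simp only [Fin.sum_univ_add, Fin.addCases_left, Fin.addCases_right,
          Preadditive.comp_sum, Preadditive.sum_comp, Category.assoc]
    _ = 𝟙 (y ⊞ z) := by rw [h₁, h₂, Category.id_comp, Category.id_comp, biprod.total]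

end AddClosure

section Conflations

variable {E : Type*} [Category E] [Preadditive E] [HasBinaryBiproducts E] (S : ExactStr E) {x y z : E} {i : x ⟶ y} {p : y ⟶ z}

lemma ExactStr.mono_of_conf (h : S.conf i p) : Mono i :=
  mono_of_isLimit_fork (S.conf_isKernel h).some

lemma ExactStr.range_postcompL_eq_ker (h : S.conf i p) (w : E) :
    LinearMap.range (postcompL (x := w) i) = LinearMap.ker (postcompL p) := by
  ext u
  constructor
  · rintro ⟨v, rfl⟩
    show (v ≫ i) ≫ p = 0
    rw [Category.assoc, S.conf_comp h, comp_zero]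
  · intro hu
    obtain ⟨v, hv⟩ := KernelFork.IsLimit.lift' (S.conf_isKernel h).some u hu
    exact ⟨v, hv⟩

end Conflations

lemma postcompL_injective {C : Type*} [Category C] [Preadditive C] {x y z : C} (f : y ⟶ z)
    [Mono f] : Function.Injective (postcompL (x := x) f) :=
  fun _ _ h => (cancel_mono f).mp h

namespace Frobenius

variable {E : Type*} [Category E] [Preadditive E] [HasFiniteBiproducts E] [HasBinaryBiproducts E]
  (S : Frobenius E)

lemma inAdd_of_isProj {m P : E} (hm : S.Good m) (hP : S.IsProj P) : InAdd m P := by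
  obtain ⟨m', ⟨e⟩⟩ := hm
  exact ((S.proj_iff_add P).mp hP).of_retract (biprod.inr ≫ e.inv) (e.hom ≫ biprod.snd) (by simp)

variable (k : Type) [Field k] [CategoryTheory.Linear k E]

lemma toS_eq_zero_iff {w y z : E} {p : y ⟶ z} (hy : S.IsProj y) (hp : S.IsDeflation p)
    (h : w ⟶ z) : S.toS k h = 0 ↔ ∃ u : w ⟶ y, u ≫ p = h := by
  refine (Submodule.Quotient.mk_eq_zero _).trans ⟨fun hh => ?_, ?_⟩
  · induction hh using Submodule.span_induction with
    | mem h hh =>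
        obtain ⟨P, a, b, hP, rfl⟩ := hh
        obtain ⟨c, hc⟩ := hP p hp b
        exact ⟨a ≫ c, by rw [Category.assoc, hc]⟩
    | zero => exact ⟨0, zero_comp⟩
    | add h h' _ _ ih ih' =>
        obtain ⟨u, rfl⟩ := ih
        obtain ⟨u', rfl⟩ := ih'
        exact ⟨u + u', Preadditive.add_comp _ _ _ _ _ _⟩
    | smul c h _ ih =>
        obtain ⟨u, rfl⟩ := ih
        exact ⟨c • u, Linear.smul_comp _ _ _ _ _ _⟩
  · rintro ⟨u, rfl⟩
    exact Submodule.subset_span ⟨y, u, p, hy, rfl⟩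

def toSLinear (x y : E) : (x ⟶ y) →ₗ[(End x)ᵐᵒᵖ] S.SHom k x y where
  toFun := S.toS k
  map_add' _ _ := rfl
  map_smul' a u := (S.preS_toS k a.unop u).symm

lemma toSLinear_surjective (x y : E) : Function.Surjective (S.toSLinear k x y) :=
  S.toS_surjective k x y

end Frobenius

section HomTensor

variable {C : Type*} [Category C] [Preadditive C] (l m : C)

noncomputable def compTensor (x : C) : ATensor ℤ (End m) (m ⟶ x) (l ⟶ m) →ₗ[ℤ] (l ⟶ x) :=
  ATensor.lift (Linear.comp l m x).flip fun u a t => (Category.assoc t a u).symm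

variable [HasFiniteBiproducts C]

lemma compTensor_bijective {x : C} (hx : InAdd m x) : Function.Bijective (compTensor l m x) := by
  obtain ⟨n, a, b, hab⟩ := inAdd_iff_exists_sum.mp hx
  set inv := ∑ j, (ATensor.mkBilin ℤ (End m) (m ⟶ x) (l ⟶ m) (b j)).comp
    (Linear.rightComp ℤ l (a j)) with hinv
  refine Function.bijective_iff_has_inverse.mpr ⟨inv, fun z => ?_, fun h => ?_⟩
  · show (inv ∘ₗ compTensor l m x) z = LinearMap.id (R := ℤ) z
    congr 1
    refine ATensor.hom_ext fun u t => ?_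
    calc inv (t ≫ u)
        = ∑ j, ATensor.mkBilin ℤ (End m) (m ⟶ x) (l ⟶ m) ((u ≫ a j) ≫ b j) t := by
          simp only [hinv, LinearMap.sum_apply, LinearMap.comp_apply,
            Linear.rightComp_apply]
          refine Finset.sum_congr rfl fun j _ => ?_
          rw [Category.assoc]
          exact (ATensor.mk_smul (A := End m) (b j) (u ≫ a j) t).symm
      _ = ATensor.mk ℤ (End m) _ _ u t := by
          rw [← LinearMap.sum_apply, ← map_sum]
          simp only [Category.assoc, ← Preadditive.comp_sum, hab, Category.comp_id]
          rfl
  · calc compTensor l m x (inv h) = ∑ j, h ≫ a j ≫ b j := by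
          simp only [hinv, LinearMap.sum_apply, LinearMap.comp_apply,
            Linear.rightComp_apply, map_sum]
          exact Finset.sum_congr rfl fun j _ => Category.assoc _ _ _
      _ = h := by rw [← Preadditive.comp_sum, hab, Category.comp_id]

noncomputable def compTensorIso {x : C} (hx : InAdd m x) :
    (atensorFunctorL (End m) (l ⟶ m)).obj (ModuleCat.of (End m)ᵐᵒᵖ (m ⟶ x)) ≅
      (ModuleCat.restrictScalars (Int.castRingHom (End l)ᵐᵒᵖ)).obj
        (ModuleCat.of (End l)ᵐᵒᵖ (l ⟶ x)) :=
  -- the target carries the `ℤ`-module structure restricted from `(End l)ᵐᵒᵖ`, not the canonical one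
  LinearEquiv.toModuleIso (LinearEquiv.ofBijective (compTensor l m x)
    (compTensor_bijective l m hx)).toAddEquiv.toIntLinearEquiv

lemma compTensorIso_hom_naturality {x y : C} (hx : InAdd m x) (hy : InAdd m y) (d : x ⟶ y) :
    (compTensorIso l m hx).hom ≫ (ModuleCat.restrictScalars (Int.castRingHom (End l)ᵐᵒᵖ)).map
        (ModuleCat.ofHom (postcompL d)) =
      (atensorFunctorL (End m) (l ⟶ m)).map (ModuleCat.ofHom (postcompL d)) ≫
        (compTensorIso l m hy).hom := by
  refine ModuleCat.hom_ext (ATensor.hom_ext fun u t => ?_)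
  show (t ≫ u) ≫ d = t ≫ u ≫ d
  exact Category.assoc t u d

end HomTensor

section FourTermComplex

variable {E : Type u} [Category.{v} E] [Preadditive E] [HasBinaryBiproducts E]
  {m Ωm p₁ p₂ p₃ : E} {g : Ωm ⟶ p₁} {f : p₁ ⟶ m} {g' : m ⊞ p₃ ⟶ p₂}
  {f' : p₂ ⟶ Ωm} (h₁ : g ≫ f = 0) (h₂ : g' ≫ f' = 0)

lemma fourTermComplex_isZero_X (w : E) (n : ℕ) :
    IsZero ((fourTermComplex w g f g' f' h₁ h₂).X (n + 4)) :=
  ModuleCat.isZero_of_subsingleton (ModuleCat.of _ PUnit)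

variable [HasFiniteBiproducts E]

noncomputable def fourTermComplexTensorIso (l : E) (hp₁ : InAdd m p₁) (hp₂ : InAdd m p₂)
    (hp₃ : InAdd m (m ⊞ p₃)) :
    ((atensorFunctorL (End m) (l ⟶ m)).mapHomologicalComplex (ComplexShape.down ℕ)).obj
        (fourTermComplex m g f g' f' h₁ h₂) ≅
      ((ModuleCat.restrictScalars (Int.castRingHom (End l)ᵐᵒᵖ)).mapHomologicalComplex
        (ComplexShape.down ℕ)).obj (fourTermComplex l g f g' f' h₁ h₂) :=
  HomologicalComplex.Hom.isoOfComponents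
    (fun i => match i with
      | 0 => compTensorIso l m (InAdd.refl m)
      | 1 => compTensorIso l m hp₁
      | 2 => compTensorIso l m hp₂
      | 3 => compTensorIso l m hp₃
      | n + 4 => IsZero.iso
          ((atensorFunctorL (End m) (l ⟶ m)).map_isZero (fourTermComplex_isZero_X h₁ h₂ m n))
          ((ModuleCat.restrictScalars (Int.castRingHom (End l)ᵐᵒᵖ)).map_isZero
            (fourTermComplex_isZero_X h₁ h₂ l n)))
    (by
      rintro _ j rfl
      match j with
      | 0 => exact compTensorIso_hom_naturality l m hp₁ (InAdd.refl m) f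
      | 1 => exact compTensorIso_hom_naturality l m hp₂ hp₁ (f' ≫ g)
      | 2 => exact compTensorIso_hom_naturality l m hp₃ hp₂ g'
      | n + 3 => exact ((atensorFunctorL (End m) (l ⟶ m)).map_isZero
          (fourTermComplex_isZero_X h₁ h₂ m n)).eq_of_src _ _)

variable (S : Frobenius E) (k : Type) [Field k] [CategoryTheory.Linear k E] (l : E)

lemma fourTermComplex_homology_zero (hp₁ : S.IsProj p₁) (hconf₁ : S.conf g f) :
    Nonempty ((fourTermComplex l g f g' f' h₁ h₂).homology 0 ≅
      ModuleCat.of (End l)ᵐᵒᵖ (S.SHom k l m)) := by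
  set K := fourTermComplex l g f g' f' h₁ h₂
  have hd : (K.sc' 1 0 0).g = 0 := K.shape 0 0 (by simp)
  obtain ⟨e⟩ := (K.sc' 1 0 0).nonempty_moduleCat_homology_iso LinearMap.id Function.injective_id
    (by rw [LinearMap.range_id, hd, ModuleCat.hom_zero, LinearMap.ker_zero]) (S.toSLinear k l m)
    (S.toSLinear_surjective k l m) (S.toS_eq_zero_iff k hp₁ ⟨_, _, hconf₁⟩)
  exact ⟨K.homologyIsoSc' 1 0 0 (by simp) (by simp) ≪≫ e⟩

lemma fourTermComplex_homology_one (hp₂ : S.IsProj p₂) (hconf₁ : S.conf g f)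
    (hconf₂ : S.conf g' f') :
    Nonempty ((fourTermComplex l g f g' f' h₁ h₂).homology 1 ≅
      ModuleCat.of (End l)ᵐᵒᵖ (S.SHom k l Ωm)) := by
  set K := fourTermComplex l g f g' f' h₁ h₂
  have := S.mono_of_conf hconf₁
  have hπf (p : l ⟶ Ωm) : S.toS k p = 0 ↔ ∃ u : l ⟶ p₂, u ≫ f' ≫ g = p ≫ g := by
    rw [S.toS_eq_zero_iff k hp₂ ⟨_, _, hconf₂⟩]
    simp only [← Category.assoc, cancel_mono]
  obtain ⟨e⟩ := (K.sc' 2 1 0).nonempty_moduleCat_homology_iso (postcompL g)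
    (postcompL_injective g) (S.range_postcompL_eq_ker hconf₁ l) (S.toSLinear k l Ωm)
    (S.toSLinear_surjective k l Ωm) hπf
  exact ⟨K.homologyIsoSc' 2 1 0 (by simp) (by simp) ≪≫ e⟩

lemma fourTermComplex_exactAt_two (hconf₁ : S.conf g f) (hconf₂ : S.conf g' f') :
    (fourTermComplex l g f g' f' h₁ h₂).ExactAt 2 := by
  rw [HomologicalComplex.exactAt_iff' _ 3 2 1 (by simp) (by simp),
    ShortComplex.moduleCat_exact_iff]
  intro u hu
  have : Mono g := S.mono_of_conf hconf₁
  have hu' : u ∈ LinearMap.ker (postcompL (x := l) f') :=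
    (cancel_mono g).mp ((Category.assoc u f' g).trans (hu.trans zero_comp.symm))
  rw [← S.range_postcompL_eq_ker hconf₂ l] at hu'
  exact hu'

lemma fourTermComplex_exactAt_three (hconf₂ : S.conf g' f') :
    (fourTermComplex l g f g' f' h₁ h₂).ExactAt 3 := by
  rw [HomologicalComplex.exactAt_iff' _ 4 3 2 (by simp) (by simp),
    ShortComplex.moduleCat_exact_iff]
  intro u hu
  have : Mono g' := S.mono_of_conf hconf₂
  exact ⟨0, (map_zero _).trans ((cancel_mono g').mp (hu.trans zero_comp.symm)).symm⟩

lemma fourTermComplex_isZero_homology (hconf₁ : S.conf g f) (hconf₂ : S.conf g' f') :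
    ∀ i, 2 ≤ i → IsZero ((fourTermComplex l g f g' f' h₁ h₂).homology i)
  | 2, _ => (fourTermComplex_exactAt_two h₁ h₂ S l hconf₁ hconf₂).isZero_homology
  | 3, _ => (fourTermComplex_exactAt_three h₁ h₂ S l hconf₂).isZero_homology
  | n + 4, _ => ShortComplex.isZero_homology_of_isZero_X₂ _ (fourTermComplex_isZero_X h₁ h₂ l n)

end FourTermComplex

end Paper

open CategoryTheory Limits Paper in
theorem statement_11_general
    (k : Type) [Field k]
    (E : Type u) [Category.{v} E] [Preadditive E] [HasFiniteBiproducts E]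
    [HasBinaryBiproducts E] [CategoryTheory.Linear k E]
    (S : Frobenius E)
    (l m : E)
    (hmg : S.Good m)
    (Ωm p₁ p₂ p₃ : E)
    (hp₁ : S.IsProj p₁) (hp₂ : S.IsProj p₂) (hp₃ : S.IsProj p₃)
    (g : Ωm ⟶ p₁) (f : p₁ ⟶ m) (g' : m ⊞ p₃ ⟶ p₂) (f' : p₂ ⟶ Ωm)
    (hconf₁ : S.conf g f) (hconf₂ : S.conf g' f') :
    -- the complex `Q_B ⊗_B T` (computing `B̲ ⊗^L_B T`) is isomorphic, as a complex of
    -- abelian groups, to the explicit complex `E(l, splice)` above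
    Nonempty
      (((atensorFunctorL (End m) (l ⟶ m)).mapHomologicalComplex
          (ComplexShape.down ℕ)).obj
          (fourTermComplex m g f g' f' (S.conf_comp hconf₁) (S.conf_comp hconf₂)) ≅
        ((ModuleCat.restrictScalars.{v} (Int.castRingHom ((End l)ᵐᵒᵖ))).mapHomologicalComplex
          (ComplexShape.down ℕ)).obj
          (fourTermComplex l g f g' f' (S.conf_comp hconf₁) (S.conf_comp hconf₂))) ∧
    -- `H₀ ≅ C(l,m)`
    Nonempty
      ((fourTermComplex l g f g' f' (S.conf_comp hconf₁) (S.conf_comp hconf₂)).homology 0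
        ≅ ModuleCat.of ((End l)ᵐᵒᵖ) (S.SHom k l m)) ∧
    -- `H₁ ≅ C(l, Ωm)`
    Nonempty
      ((fourTermComplex l g f g' f' (S.conf_comp hconf₁) (S.conf_comp hconf₂)).homology 1
        ≅ ModuleCat.of ((End l)ᵐᵒᵖ) (S.SHom k l Ωm)) ∧
    -- `Hᵢ = 0` otherwise
    (∀ i : ℕ, 2 ≤ i →
      IsZero ((fourTermComplex l g f g' f'
        (S.conf_comp hconf₁) (S.conf_comp hconf₂)).homology i)) := by
  refine ⟨⟨fourTermComplexTensorIso _ _ l (S.inAdd_of_isProj hmg hp₁) (S.inAdd_of_isProj hmg hp₂)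
      ((InAdd.refl m).biprod (S.inAdd_of_isProj hmg hp₃))⟩,
    fourTermComplex_homology_zero _ _ S k l hp₁ hconf₁,
    fourTermComplex_homology_one _ _ S k l hp₂ hconf₁ hconf₂,
    fourTermComplex_isZero_homology _ _ S l hconf₁ hconf₂⟩

open CategoryTheory Limits Paper in
/-- **Statement 11** (Lemma 3.3).
In the setting of the paper (k-linear Frobenius category `E` with projectives `add r`,
stable category `C` 2-CY, Hom-finite, with split idempotents; `l, m` good maximal rigid
with `Σ²l ≅ l`, `Σ²m ≅ m`; conflations `0 → Ωm →g→ p₁ →f→ m → 0` and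
`0 → m⊞p₃ →g'→ p₂ →f'→ Ωm → 0` with `p₁, p₂, p₃` projective), the object
`B̲ ⊗^L_B T` of `D(Aᵒᵖ)` — computed from the induced projective resolution
`Q_B : 0 → E(m,m⊞p₃) → E(m,p₂) → E(m,p₁) → E(m,m)` of `B̲` by tensoring with
`T = E(l,m)` — is isomorphic to the complex
`0 → E(l,m⊞p₃) →g'∗→ E(l,p₂) →(gf')∗→ E(l,p₁) →f∗→ E(l,m)`
(homological degrees 3, 2, 1, 0), and its homology is `H₀ ≅ C(l,m)`, `H₁ ≅ C(l,Ωm)`,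
and `Hᵢ = 0` for `i ≠ 0, 1`. -/
theorem statement_11
    (k : Type) [Field k] [IsAlgClosed k]
    (E : Type u) [Category.{v} E] [Preadditive E] [HasFiniteBiproducts E]
    [HasBinaryBiproducts E] [CategoryTheory.Linear k E]
    (S : Frobenius E) (T : TriData S k)
    (l m : E)
    (hlg : S.Good l) (hmg : S.Good m)
    (hl : T.MaxRigid (SC.of S k l)) (hm : T.MaxRigid (SC.of S k m))
    (hsl : T.SuspSqFix (SC.of S k l)) (hsm : T.SuspSqFix (SC.of S k m))
    (Ωm p₁ p₂ p₃ : E)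
    (hp₁ : S.IsProj p₁) (hp₂ : S.IsProj p₂) (hp₃ : S.IsProj p₃)
    (g : Ωm ⟶ p₁) (f : p₁ ⟶ m) (g' : m ⊞ p₃ ⟶ p₂) (f' : p₂ ⟶ Ωm)
    (hconf₁ : S.conf g f) (hconf₂ : S.conf g' f') :
    -- the complex `Q_B ⊗_B T` (computing `B̲ ⊗^L_B T`) is isomorphic, as a complex of
    -- abelian groups, to the explicit complex `E(l, splice)` above
    Nonempty
      (((atensorFunctorL (End m) (l ⟶ m)).mapHomologicalComplex
          (ComplexShape.down ℕ)).obj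
          (fourTermComplex m g f g' f' (S.conf_comp hconf₁) (S.conf_comp hconf₂)) ≅
        ((ModuleCat.restrictScalars.{v} (Int.castRingHom ((End l)ᵐᵒᵖ))).mapHomologicalComplex
          (ComplexShape.down ℕ)).obj
          (fourTermComplex l g f g' f' (S.conf_comp hconf₁) (S.conf_comp hconf₂))) ∧
    -- `H₀ ≅ C(l,m)`
    Nonempty
      ((fourTermComplex l g f g' f' (S.conf_comp hconf₁) (S.conf_comp hconf₂)).homology 0
        ≅ ModuleCat.of ((End l)ᵐᵒᵖ) (S.SHom k l m)) ∧
    -- `H₁ ≅ C(l, Ωm)`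
    Nonempty
      ((fourTermComplex l g f g' f' (S.conf_comp hconf₁) (S.conf_comp hconf₂)).homology 1
        ≅ ModuleCat.of ((End l)ᵐᵒᵖ) (S.SHom k l Ωm)) ∧
    -- `Hᵢ = 0` otherwise
    (∀ i : ℕ, 2 ≤ i →
      IsZero ((fourTermComplex l g f g' f'
        (S.conf_comp hconf₁) (S.conf_comp hconf₂)).homology i)) :=
  statement_11_general k E S l m hmg Ωm p₁ p₂ p₃ hp₁ hp₂ hp₃ g f g' f' hconf₁ hconf₂
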